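/- arXiv:1810.10067 — 4 statements merged into one kernel-verified Lean document; each statement's English description precedes it below -/
import Mathlib

section
/- Let A₁,…,A_n ∈ B(H), let 0 ≤ α ≤ 1, and let p, q > 1 with 1/p + 1/q = 1. Then ‖Σ_{i=1}^n A_i‖ ≤ (Σ_{i=1}^n ‖|A_i|^α‖^p)^{1/p} · (Σ_{i=1}^n ‖|A_i*|^{1-α}‖^q)^{1/q}. -/
open scoped InnerProductSpace
open ContinuousLinearMap

/-- The absolute value `|A| = (A^*A)^{1/2}` of a bounded operator, via the
continuous functional calculus. -/
noncomputable def oabs {H : Type*} [NormedAddCommGroup H] [InnerProductSpace ℂ H]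
    [CompleteSpace H] (A : H →L[ℂ] H) : H →L[ℂ] H :=
  cfc Real.sqrt (adjoint A * A)

/-! In norm, `‖|A|^α‖ = ‖A‖^α` and `‖|A^*|^{1-α}‖ = ‖A‖^{1-α}`, so each `‖A_i‖` is exactly the
product of the two weights, and the bound is the triangle inequality followed by Hölder's
inequality for finite sums. -/

theorem norm_sum_le_Lp_mul_Lq {ι E : Type*} [SeminormedAddCommGroup E] (s : Finset ι)
    (a : ι → E) {f g : ι → ℝ} (hf : ∀ i ∈ s, 0 ≤ f i) (hg : ∀ i ∈ s, 0 ≤ g i)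
    (hfg : ∀ i ∈ s, ‖a i‖ ≤ f i * g i) {p q : ℝ} (hpq : p.HolderConjugate q) :
    ‖∑ i ∈ s, a i‖ ≤ (∑ i ∈ s, f i ^ p) ^ (1 / p) * (∑ i ∈ s, g i ^ q) ^ (1 / q) :=
  calc ‖∑ i ∈ s, a i‖ ≤ ∑ i ∈ s, ‖a i‖ := norm_sum_le s a
    _ ≤ ∑ i ∈ s, f i * g i := Finset.sum_le_sum hfg
    _ ≤ _ := Real.inner_le_Lp_mul_Lq_of_nonneg s hpq hf hg

section CStarAlgebra

variable {A : Type*} [CStarAlgebra A] [PartialOrder A] [StarOrderedRing A]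

theorem norm_cfc_rpow [Nontrivial A] {a : A} (ha : 0 ≤ a) {β : ℝ} (hβ : 0 ≤ β) :
    ‖cfc (fun t : ℝ => t ^ β) a‖ = ‖a‖ ^ β := by
  rcases hβ.eq_or_lt with rfl | hβ
  · simp only [Real.rpow_zero]
    rw [cfc_const_one ℝ a, norm_one]
  · rw [← CFC.rpow_eq_cfc_real ha, CFC.norm_rpow a hβ ha]

theorem norm_cfc_rpow_abs_mul_norm_cfc_rpow_abs_star (a : A) {α : ℝ} (hα0 : 0 ≤ α)
    (hα1 : α ≤ 1) :
    ‖cfc (fun t : ℝ => t ^ α) (CFC.abs a)‖ * ‖cfc (fun t : ℝ => t ^ (1 - α)) (CFC.abs (star a))‖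
      = ‖a‖ := by
  nontriviality A
  rw [norm_cfc_rpow (CFC.abs_nonneg a) hα0, norm_cfc_rpow (CFC.abs_nonneg _) (sub_nonneg.2 hα1),
    CFC.norm_abs, CFC.norm_abs, norm_star, ← Real.rpow_add' (norm_nonneg a) (by simp),
    add_sub_cancel, Real.rpow_one]

end CStarAlgebra

theorem oabs_eq_abs {H : Type*} [NormedAddCommGroup H] [InnerProductSpace ℂ H] [CompleteSpace H]
    (A : H →L[ℂ] H) : oabs A = CFC.abs A := by
  rw [oabs, CFC.abs, CFC.sqrt_eq_real_sqrt _ (star_mul_self_nonneg A), cfcₙ_eq_cfc,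
    star_eq_adjoint]

theorem stmt8_general {H : Type*} [NormedAddCommGroup H] [InnerProductSpace ℂ H] [CompleteSpace H]
    (n : ℕ) (A : Fin n → (H →L[ℂ] H))
    (α : ℝ) (hα0 : 0 ≤ α) (hα1 : α ≤ 1)
    (p q : ℝ) (hp : 1 < p) (hpq : 1 / p + 1 / q = 1) :
    ‖∑ i, A i‖ ≤
      (∑ i, ‖cfc (fun t : ℝ => t ^ α) (oabs (A i))‖ ^ p) ^ (1 / p) *
        (∑ i, ‖cfc (fun t : ℝ => t ^ (1 - α)) (oabs (adjoint (A i)))‖ ^ q) ^ (1 / q) := by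
  have hpq' : p.HolderConjugate q := Real.holderConjugate_iff.2 ⟨hp, by simpa using hpq⟩
  refine norm_sum_le_Lp_mul_Lq _ A (fun _ _ => norm_nonneg _) (fun _ _ => norm_nonneg _)
    (fun i _ => ?_) hpq'
  rw [oabs_eq_abs, oabs_eq_abs, ← star_eq_adjoint,
    norm_cfc_rpow_abs_mul_norm_cfc_rpow_abs_star (A i) hα0 hα1]

theorem stmt8 {H : Type*} [NormedAddCommGroup H] [InnerProductSpace ℂ H] [CompleteSpace H]
    (n : ℕ) (A : Fin n → (H →L[ℂ] H))
    (α : ℝ) (hα0 : 0 ≤ α) (hα1 : α ≤ 1)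
    (p q : ℝ) (hp : 1 < p) (hq : 1 < q) (hpq : 1 / p + 1 / q = 1) :
    ‖∑ i, A i‖ ≤
      (∑ i, ‖cfc (fun t : ℝ => t ^ α) (oabs (A i))‖ ^ p) ^ (1 / p) *
        (∑ i, ‖cfc (fun t : ℝ => t ^ (1 - α)) (oabs (adjoint (A i)))‖ ^ q) ^ (1 / q) :=
  stmt8_general n A α hα0 hα1 p q hp hpq
end

section
/- Let A ∈ B(H) have Cartesian decomposition A = P + iQ, where P and Q are selfadjoint, and let f, g be nonnegative continuous functions on [0,∞) satisfying f(t)g(t) = t for all t ≥ 0. Then for all vectors x, y ∈ H, |⟨Ax, y⟩| ≤ ‖f(|P|)x‖ · ‖g(|P|)y‖ + ‖f(|Q|)x‖ · ‖g(|Q|)y‖. -/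
/-!
For selfadjoint `P`, `|P|` is `|·|` applied to `P`, so `f(|P|) = (f ∘ |·|)(P)`. Since
`f(0) g(0) = 0`, one of `f, g` (say `f`) vanishes at `0` and has a continuous odd extension
`F`; then `g(|t|) F(t) = t` gives `P = g(|P|) F(P)`, hence
`⟪P x, y⟫ = ⟪F(P) x, g(|P|) y⟫`, and `‖F(P) x‖ = ‖f(|P|) x‖` because `|F(t)| = f(|t|)`.
Cauchy–Schwarz bounds each of `⟪P x, y⟫` and `⟪Q x, y⟫`, and `⟪A x, y⟫` is their
combination `⟪P x, y⟫ - i ⟪Q x, y⟫`.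
-/

open scoped InnerProductSpace
open ContinuousLinearMap

noncomputable def oddExt (f : ℝ → ℝ) (t : ℝ) : ℝ := if 0 ≤ t then f t else -f (-t)

lemma continuous_oddExt {f : ℝ → ℝ} (hf : Continuous f) (hf0 : f 0 = 0) :
    Continuous (oddExt f) :=
  Continuous.if_le hf (by fun_prop) continuous_const continuous_id fun t ht => by
    simp [← ht, hf0]

lemma abs_oddExt (f : ℝ → ℝ) (t : ℝ) : |oddExt f t| = |f (|t|)| := by
  rcases le_or_gt 0 t with ht | ht
  · simp [oddExt, ht, abs_of_nonneg ht]
  · simp [oddExt, not_le.mpr ht, abs_of_neg ht]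

lemma mul_oddExt {f g : ℝ → ℝ} (hfg : ∀ t : ℝ, 0 ≤ t → f t * g t = t) (t : ℝ) :
    g |t| * oddExt f t = t := by
  rcases le_or_gt 0 t with ht | ht
  · simp only [oddExt, if_pos ht, abs_of_nonneg ht]
    rw [mul_comm, hfg t ht]
  · simp only [oddExt, if_neg (not_le.mpr ht), abs_of_neg ht]
    rw [mul_neg, mul_comm, hfg (-t) (by linarith), neg_neg]

lemma norm_apply_eq_of_adjoint_comp_self_eq {𝕜 E F : Type*} [RCLike 𝕜]
    [NormedAddCommGroup E] [InnerProductSpace 𝕜 E] [CompleteSpace E]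
    [NormedAddCommGroup F] [InnerProductSpace 𝕜 F] [CompleteSpace F]
    {B C : E →L[𝕜] F} (h : adjoint B ∘L B = adjoint C ∘L C) (x : E) : ‖B x‖ = ‖C x‖ := by
  rw [apply_norm_eq_sqrt_inner_adjoint_left, h, ← apply_norm_eq_sqrt_inner_adjoint_left]

section SelfAdjoint

variable {H : Type*} [NormedAddCommGroup H] [InnerProductSpace ℂ H] [CompleteSpace H]

lemma oabs_eq_cfc_abs {P : H →L[ℂ] H} (hP : IsSelfAdjoint P) :
    oabs P = cfc (fun t : ℝ => |t|) P := by
  have hsq : adjoint P * P = cfc (fun t : ℝ => t * t) P := by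
    rw [cfc_mul (fun t : ℝ => t) (fun t : ℝ => t) P, cfc_id' ℝ P, hP.adjoint_eq]
  rw [oabs, hsq, ← cfc_comp Real.sqrt (fun t : ℝ => t * t) P]
  exact cfc_congr fun t _ => Real.sqrt_mul_self_eq_abs t

lemma cfc_oabs {P : H →L[ℂ] H} (hP : IsSelfAdjoint P) {f : ℝ → ℝ} (hf : Continuous f) :
    cfc f (oabs P) = cfc (fun t : ℝ => f |t|) P := by
  rw [oabs_eq_cfc_abs hP, ← cfc_comp f (fun t : ℝ => |t|) P]
  rfl

lemma norm_cfc_apply_eq_of_abs_eq (P : H →L[ℂ] H) {u v : ℝ → ℝ} (hu : Continuous u)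
    (hv : Continuous v) (h : ∀ t, |u t| = |v t|) (x : H) :
    ‖cfc u P x‖ = ‖cfc v P x‖ := by
  have hsq : ∀ w : ℝ → ℝ, Continuous w →
      adjoint (cfc w P) ∘L cfc w P = cfc (fun t => |w t| * |w t|) P := fun w hw => by
    rw [(cfc_predicate w P).adjoint_eq, ← mul_def, ← cfc_mul w w P]
    exact cfc_congr fun t _ => (abs_mul_abs_self (w t)).symm
  refine norm_apply_eq_of_adjoint_comp_self_eq ?_ x
  rw [hsq u hu, hsq v hv]
  simp only [h]

lemma norm_inner_apply_le_of_mul_eq_id {P : H →L[ℂ] H} (hP : IsSelfAdjoint P)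
    {u v : ℝ → ℝ} (hu : Continuous u) (hv : Continuous v) (huv : ∀ t, u t * v t = t)
    (x y : H) : ‖⟪P x, y⟫_ℂ‖ ≤ ‖cfc v P x‖ * ‖cfc u P y‖ := by
  have hfactor : P = cfc u P * cfc v P := by
    rw [← cfc_mul u v P]
    conv_lhs => rw [← cfc_id' ℝ P]
    exact cfc_congr fun t _ => (huv t).symm
  have hinner : ⟪P x, y⟫_ℂ = ⟪cfc v P x, cfc u P y⟫_ℂ := by
    conv_lhs => rw [hfactor]
    rw [mul_apply_eq_comp, ← adjoint_inner_right, (cfc_predicate u P).adjoint_eq]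
  exact hinner ▸ norm_inner_le_norm _ _

lemma norm_inner_apply_le_of_map_zero {P : H →L[ℂ] H} (hP : IsSelfAdjoint P)
    {f g : ℝ → ℝ} (hf : Continuous f) (hg : Continuous g) (hf0 : f 0 = 0)
    (hfg : ∀ t : ℝ, 0 ≤ t → f t * g t = t) (x y : H) :
    ‖⟪P x, y⟫_ℂ‖ ≤ ‖cfc f (oabs P) x‖ * ‖cfc g (oabs P) y‖ := by
  have hfabs : Continuous fun t : ℝ => f |t| := hf.comp continuous_abs
  have hF := continuous_oddExt hf hf0
  rw [cfc_oabs hP hf, cfc_oabs hP hg,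
    ← norm_cfc_apply_eq_of_abs_eq P hF hfabs (abs_oddExt f) x]
  exact norm_inner_apply_le_of_mul_eq_id hP (hg.comp continuous_abs) hF (mul_oddExt hfg) x y

lemma norm_inner_apply_le {P : H →L[ℂ] H} (hP : IsSelfAdjoint P)
    {f g : ℝ → ℝ} (hf : Continuous f) (hg : Continuous g)
    (hfg : ∀ t : ℝ, 0 ≤ t → f t * g t = t) (x y : H) :
    ‖⟪P x, y⟫_ℂ‖ ≤ ‖cfc f (oabs P) x‖ * ‖cfc g (oabs P) y‖ := by
  rcases mul_eq_zero.mp (hfg 0 le_rfl) with hf0 | hg0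
  · exact norm_inner_apply_le_of_map_zero hP hf hg hf0 hfg x y
  · have hgf : ∀ t : ℝ, 0 ≤ t → g t * f t = t := fun t ht => by rw [mul_comm, hfg t ht]
    calc ‖⟪P x, y⟫_ℂ‖ = ‖⟪P y, x⟫_ℂ‖ := by
          rw [← inner_conj_symm, RCLike.norm_conj, ← adjoint_inner_left, hP.adjoint_eq]
      _ ≤ ‖cfc g (oabs P) y‖ * ‖cfc f (oabs P) x‖ :=
        norm_inner_apply_le_of_map_zero hP hg hf hg0 hgf y x
      _ = _ := mul_comm _ _

end SelfAdjoint

theorem stmt9_general {H : Type*} [NormedAddCommGroup H] [InnerProductSpace ℂ H] [CompleteSpace H]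
    (A P Q : H →L[ℂ] H) (hP : IsSelfAdjoint P) (hQ : IsSelfAdjoint Q)
    (hA : A = P + Complex.I • Q) (f g : ℝ → ℝ) (hf : Continuous f) (hg : Continuous g)
    (hfg : ∀ t : ℝ, 0 ≤ t → f t * g t = t)
    (x y : H) :
    ‖⟪A x, y⟫_ℂ‖ ≤
      ‖cfc f (oabs P) x‖ * ‖cfc g (oabs P) y‖ +
        ‖cfc f (oabs Q) x‖ * ‖cfc g (oabs Q) y‖ := by
  have hsplit : ⟪A x, y⟫_ℂ = ⟪P x, y⟫_ℂ + starRingEnd ℂ Complex.I * ⟪Q x, y⟫_ℂ := by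
    rw [hA, add_apply, smul_apply, inner_add_left, inner_smul_left]
  calc ‖⟪A x, y⟫_ℂ‖ ≤ ‖⟪P x, y⟫_ℂ‖ + ‖⟪Q x, y⟫_ℂ‖ := by
        rw [hsplit]
        refine (norm_add_le _ _).trans_eq ?_
        simp
    _ ≤ _ := add_le_add (norm_inner_apply_le hP hf hg hfg x y)
        (norm_inner_apply_le hQ hf hg hfg x y)

theorem stmt9 {H : Type*} [NormedAddCommGroup H] [InnerProductSpace ℂ H] [CompleteSpace H]
    (A P Q : H →L[ℂ] H) (hP : IsSelfAdjoint P) (hQ : IsSelfAdjoint Q)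
    (hA : A = P + Complex.I • Q) (f g : ℝ → ℝ) (hf : Continuous f) (hg : Continuous g)
    (hf0 : ∀ t : ℝ, 0 ≤ t → 0 ≤ f t) (hg0 : ∀ t : ℝ, 0 ≤ t → 0 ≤ g t)
    (hfg : ∀ t : ℝ, 0 ≤ t → f t * g t = t)
    (x y : H) :
    ‖⟪A x, y⟫_ℂ‖ ≤
      ‖cfc f (oabs P) x‖ * ‖cfc g (oabs P) y‖ +
        ‖cfc f (oabs Q) x‖ * ‖cfc g (oabs Q) y‖ :=
  stmt9_general A P Q hP hQ hA f g hf hg hfg x y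
end

section
/- Let A ∈ B(H) have Cartesian decomposition A = P + iQ, where P and Q are selfadjoint, and let 0 ≤ α ≤ 1. Then for all vectors x, y ∈ H, |⟨Ax, y⟩| ≤ ‖|P|^α x‖ · ‖|P|^{1-α} y‖ + ‖|Q|^α x‖ · ‖|Q|^{1-α} y‖. -/
/-!
Since `⟪A x, y⟫ = ⟪P x, y⟫ - i ⟪Q x, y⟫`, it suffices to bound `|⟪P x, y⟫|` for selfadjoint `P`.
Factor `t = (sign t * |t| ^ (1 - α)) * |t| ^ α` and apply the functional calculus of `P`: this gives
`⟪P x, y⟫ = ⟪|P| ^ α x, S y⟫` with `S` selfadjoint and `S ^ 2 = |P| ^ (2 (1 - α))`, so that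
`‖S y‖ = ‖|P| ^ (1 - α) y‖`, and Cauchy–Schwarz concludes. The signed factor is continuous only
for a positive exponent; when `α = 1` it is moved to the side of `x` using
`⟪P x, y⟫ = conj ⟪P y, x⟫`.
-/

open scoped InnerProductSpace
open ContinuousLinearMap

/-- `t ↦ sign t * |t| ^ β`, written so that its continuity for `β ≥ 0` is evident. -/
noncomputable def signedRpow (β t : ℝ) : ℝ :=
  max t 0 ^ β - max (-t) 0 ^ β

lemma continuous_signedRpow {β : ℝ} (hβ : 0 ≤ β) : Continuous (signedRpow β) := by
  unfold signedRpow
  fun_prop (disch := exact Or.inr hβ)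

lemma abs_signedRpow {β : ℝ} (hβ : β ≠ 0) (t : ℝ) : |signedRpow β t| = |t| ^ β := by
  rcases le_total t 0 with ht | ht
  · simp [signedRpow, ht, Real.zero_rpow hβ, abs_of_nonpos ht,
      abs_of_nonneg (Real.rpow_nonneg (neg_nonneg.2 ht) β)]
  · simp [signedRpow, ht, Real.zero_rpow hβ, abs_of_nonneg ht,
      abs_of_nonneg (Real.rpow_nonneg ht β)]

lemma signedRpow_mul_abs_rpow {β γ : ℝ} (hβ : β ≠ 0) (hβγ : β + γ = 1) (t : ℝ) :
    signedRpow β t * |t| ^ γ = t := by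
  rcases le_total t 0 with ht | ht
  · simp [signedRpow, ht, Real.zero_rpow hβ, abs_of_nonpos ht,
      ← Real.rpow_add' (neg_nonneg.2 ht) (hβγ ▸ one_ne_zero), hβγ]
  · simp [signedRpow, ht, Real.zero_rpow hβ, abs_of_nonneg ht,
      ← Real.rpow_add' ht (hβγ ▸ one_ne_zero), hβγ]

lemma continuous_abs_rpow {β : ℝ} (hβ : 0 ≤ β) : Continuous fun t : ℝ => |t| ^ β := by
  fun_prop (disch := exact Or.inr hβ)

section SelfAdjoint

variable {H : Type*} [NormedAddCommGroup H] [InnerProductSpace ℂ H] [CompleteSpace H]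
  {a : H →L[ℂ] H}

lemma oabs_eq_cfcAbs (A : H →L[ℂ] H) : oabs A = CFC.abs A := by
  rw [oabs, CFC.abs, CFC.sqrt_eq_real_sqrt _ (star_mul_self_nonneg A), cfcₙ_eq_cfc, star_eq_adjoint]

lemma IsSelfAdjoint.cfc_rpow_oabs (ha : IsSelfAdjoint a) {β : ℝ} (hβ : 0 ≤ β) :
    cfc (fun t : ℝ => t ^ β) (oabs a) = cfc (fun t : ℝ => |t| ^ β) a := by
  rw [oabs_eq_cfcAbs, CFC.abs_eq_cfc_norm a ha, ← cfc_comp' (fun t : ℝ => t ^ β) (‖·‖) a]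
  rfl

lemma inner_cfc_mul_apply {f g : ℝ → ℝ}
    (hf : ContinuousOn f (spectrum ℝ a)) (hg : ContinuousOn g (spectrum ℝ a)) (x y : H) :
    ⟪cfc (fun t => f t * g t) a x, y⟫_ℂ = ⟪cfc g a x, cfc f a y⟫_ℂ := by
  rw [cfc_mul f g a hf hg, mul_apply_eq_comp, ← adjoint_inner_left,
    (IsSelfAdjoint.cfc (f := f)).adjoint_eq]

lemma norm_cfc_apply_eq_of_abs_eq_s10 {f g : ℝ → ℝ}
    (hf : ContinuousOn f (spectrum ℝ a)) (hg : ContinuousOn g (spectrum ℝ a))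
    (hfg : ∀ t ∈ spectrum ℝ a, |f t| = |g t|) (y : H) :
    ‖cfc f a y‖ = ‖cfc g a y‖ := by
  have hsq : ∀ h : ℝ → ℝ, ContinuousOn h (spectrum ℝ a) →
      adjoint (cfc h a) ∘L cfc h a = cfc (fun t => h t * h t) a := fun h hh => by
    rw [← star_eq_adjoint, (IsSelfAdjoint.cfc (f := h)).star_eq, cfc_mul h h a hh hh]; rfl
  have hfg' : cfc (fun t => f t * f t) a = cfc (fun t => g t * g t) a :=
    cfc_congr fun t ht => by rw [← abs_mul_abs_self, hfg t ht, abs_mul_abs_self]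
  rw [← sq_eq_sq₀ (norm_nonneg _) (norm_nonneg _), apply_norm_sq_eq_inner_adjoint_left,
    apply_norm_sq_eq_inner_adjoint_left, hsq f hf, hsq g hg, hfg']

lemma IsSelfAdjoint.norm_inner_apply_le_of_pos (ha : IsSelfAdjoint a) {β γ : ℝ} (hβ : 0 < β)
    (hγ : 0 ≤ γ) (hβγ : β + γ = 1) (x y : H) :
    ‖⟪a x, y⟫_ℂ‖ ≤ ‖cfc (fun t : ℝ => |t| ^ γ) a x‖ * ‖cfc (fun t : ℝ => |t| ^ β) a y‖ := by
  have hfac : cfc (fun t => signedRpow β t * |t| ^ γ) a = a := by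
    simp only [signedRpow_mul_abs_rpow hβ.ne' hβγ, cfc_id' ℝ a ha]
  have hsigned := (continuous_signedRpow hβ.le).continuousOn (s := spectrum ℝ a)
  calc ‖⟪a x, y⟫_ℂ‖ = ‖⟪cfc (fun t => signedRpow β t * |t| ^ γ) a x, y⟫_ℂ‖ := by rw [hfac]
    _ = ‖⟪cfc (fun t : ℝ => |t| ^ γ) a x, cfc (signedRpow β) a y⟫_ℂ‖ := by
        rw [inner_cfc_mul_apply hsigned (continuous_abs_rpow hγ).continuousOn]
    _ ≤ ‖cfc (fun t : ℝ => |t| ^ γ) a x‖ * ‖cfc (signedRpow β) a y‖ := norm_inner_le_norm _ _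
    _ = _ := by
        rw [norm_cfc_apply_eq_of_abs_eq_s10 hsigned (continuous_abs_rpow hβ.le).continuousOn
          fun t _ => (abs_signedRpow hβ.ne' t).trans
            (abs_of_nonneg (Real.rpow_nonneg (abs_nonneg t) β)).symm]

lemma IsSelfAdjoint.norm_inner_apply_le (ha : IsSelfAdjoint a) {β γ : ℝ} (hβ : 0 ≤ β)
    (hγ : 0 ≤ γ) (hβγ : β + γ = 1) (x y : H) :
    ‖⟪a x, y⟫_ℂ‖ ≤ ‖cfc (fun t : ℝ => |t| ^ γ) a x‖ * ‖cfc (fun t : ℝ => |t| ^ β) a y‖ := by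
  rcases hβ.lt_or_eq with hβ | rfl
  · exact ha.norm_inner_apply_le_of_pos hβ hγ hβγ x y
  · rw [← adjoint_inner_right, ha.adjoint_eq, ← inner_conj_symm, RCLike.norm_conj, mul_comm]
    exact ha.norm_inner_apply_le_of_pos (by linarith) le_rfl (by linarith) y x

lemma IsSelfAdjoint.norm_inner_apply_le_oabs (ha : IsSelfAdjoint a) {α : ℝ} (hα0 : 0 ≤ α)
    (hα1 : α ≤ 1) (x y : H) :
    ‖⟪a x, y⟫_ℂ‖ ≤ ‖cfc (fun t : ℝ => t ^ α) (oabs a) x‖ *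
      ‖cfc (fun t : ℝ => t ^ (1 - α)) (oabs a) y‖ := by
  rw [ha.cfc_rpow_oabs hα0, ha.cfc_rpow_oabs (sub_nonneg.2 hα1)]
  exact ha.norm_inner_apply_le (sub_nonneg.2 hα1) hα0 (sub_add_cancel 1 α) x y

end SelfAdjoint

lemma norm_inner_add_I_smul_apply_le {H : Type*} [NormedAddCommGroup H] [InnerProductSpace ℂ H]
    (P Q : H →L[ℂ] H) (x y : H) :
    ‖⟪(P + Complex.I • Q) x, y⟫_ℂ‖ ≤ ‖⟪P x, y⟫_ℂ‖ + ‖⟪Q x, y⟫_ℂ‖ := by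
  calc ‖⟪(P + Complex.I • Q) x, y⟫_ℂ‖ = ‖⟪P x, y⟫_ℂ + (starRingEnd ℂ) Complex.I * ⟪Q x, y⟫_ℂ‖ := by
        rw [add_apply, smul_apply, inner_add_left, inner_smul_left]
    _ ≤ ‖⟪P x, y⟫_ℂ‖ + ‖⟪Q x, y⟫_ℂ‖ := by
        grw [norm_add_le, norm_mul, RCLike.norm_conj, Complex.norm_I, one_mul]

theorem stmt10 {H : Type*} [NormedAddCommGroup H] [InnerProductSpace ℂ H] [CompleteSpace H]
    (A P Q : H →L[ℂ] H) (hP : IsSelfAdjoint P) (hQ : IsSelfAdjoint Q)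
    (hA : A = P + Complex.I • Q)
    (α : ℝ) (hα0 : 0 ≤ α) (hα1 : α ≤ 1) (x y : H) :
    ‖⟪A x, y⟫_ℂ‖ ≤
      ‖cfc (fun t : ℝ => t ^ α) (oabs P) x‖ * ‖cfc (fun t : ℝ => t ^ (1 - α)) (oabs P) y‖ +
        ‖cfc (fun t : ℝ => t ^ α) (oabs Q) x‖ *
          ‖cfc (fun t : ℝ => t ^ (1 - α)) (oabs Q) y‖ := by
  subst hA
  grw [norm_inner_add_I_smul_apply_le, hP.norm_inner_apply_le_oabs hα0 hα1,
    hQ.norm_inner_apply_le_oabs hα0 hα1]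
end

section
/- Let C ∈ B(H) be such that |C*|C = C*|C*|. Then the numerical radius satisfies w(C*C) ≤ (1/4) · (‖C‖ + ‖C²‖^{1/2})²; equivalently, for every unit vector x ∈ H, |⟨C*Cx, x⟩| ≤ (1/4) · (‖C‖ + ‖C²‖^{1/2})². -/
open scoped InnerProductSpace
open ContinuousLinearMap

/-! With `P = |C*|`, the operator `P C` is self-adjoint by hypothesis, and `P² = C C*` gives
`‖P C‖ = ‖C‖²` and `‖C P‖ = ‖C²‖`. Since `P C` and `C P` have the same spectral radius and the
norm of a self-adjoint operator is its spectral radius, `‖C‖² ≤ ‖C²‖`. Hence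
`|⟨C*C x, x⟩| = ‖C x‖² ≤ ‖C‖² ≤ (‖C‖ + ‖C²‖^{1/2})² / 4`. -/

open scoped ENNReal

theorem spectralRadius_mul_comm {𝕜 A : Type*} [NormedField 𝕜] [Ring A] [Algebra 𝕜 A] (a b : A) :
    spectralRadius 𝕜 (a * b) = spectralRadius 𝕜 (b * a) := by
  suffices ∀ a b : A, spectralRadius 𝕜 (a * b) ≤ spectralRadius 𝕜 (b * a) from
    le_antisymm (this a b) (this b a)
  intro a b
  refine iSup₂_le fun k hk => ?_
  rcases eq_or_ne k 0 with rfl | hk0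
  · simp
  · have hk' : k ∈ spectrum 𝕜 (b * a) :=
      ((spectrum.nonzero_mul_comm a b).subset (Set.mem_sdiff_of_mem hk hk0)).1
    exact le_iSup₂ (f := fun k (_ : k ∈ spectrum 𝕜 (b * a)) => (‖k‖₊ : ℝ≥0∞)) k hk'

section CStarAlgebra

variable {A : Type*} [CStarAlgebra A]

lemma IsSelfAdjoint.norm_le_norm_mul_comm {a b : A} (h : IsSelfAdjoint (a * b)) :
    ‖a * b‖ ≤ ‖b * a‖ := by
  rcases subsingleton_or_nontrivial A with hA | hA
  · simp [Subsingleton.elim (a * b) 0]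
  rw [← h.toReal_spectralRadius_complex_eq_norm, spectralRadius_mul_comm]
  exact ENNReal.toReal_le_of_le_ofReal (norm_nonneg _)
    ((spectrum.spectralRadius_le_nnnorm _).trans_eq (ofReal_norm _).symm)

variable [PartialOrder A] [StarOrderedRing A]

lemma cfcAbs_star_mul_self (c : A) : CFC.abs (star c) * CFC.abs (star c) = c * star c := by
  rw [CFC.abs_mul_abs, star_star]

lemma norm_cfcAbs_star_mul (c : A) : ‖CFC.abs (star c) * c‖ = ‖c‖ ^ 2 := by
  have hsq : star (CFC.abs (star c) * c) * (CFC.abs (star c) * c)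
      = (star c * c) * (star c * c) := by
    rw [star_mul, (CFC.abs_nonneg (star c)).isSelfAdjoint.star_eq, mul_assoc, ← mul_assoc _ _ c,
      cfcAbs_star_mul_self]
    noncomm_ring
  refine (pow_left_inj₀ (norm_nonneg _) (by positivity) two_ne_zero).1 ?_
  rw [sq, ← CStarRing.norm_star_mul_self, hsq, (IsSelfAdjoint.star_mul_self c).norm_mul_self,
    CStarRing.norm_star_mul_self]
  ring

lemma norm_mul_cfcAbs_star (c : A) : ‖c * CFC.abs (star c)‖ = ‖c ^ 2‖ := by
  have hsq : (c * CFC.abs (star c)) * star (c * CFC.abs (star c)) = c ^ 2 * star (c ^ 2) := by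
    rw [star_mul, (CFC.abs_nonneg (star c)).isSelfAdjoint.star_eq, mul_assoc,
      ← mul_assoc (CFC.abs _), cfcAbs_star_mul_self, star_pow]
    noncomm_ring
  refine (pow_left_inj₀ (norm_nonneg _) (norm_nonneg _) two_ne_zero).1 ?_
  rw [sq, ← CStarRing.norm_self_mul_star, hsq, CStarRing.norm_self_mul_star, ← sq]

lemma sq_norm_le_norm_sq_of_cfcAbs_star_mul_eq {c : A}
    (h : CFC.abs (star c) * c = star c * CFC.abs (star c)) : ‖c‖ ^ 2 ≤ ‖c ^ 2‖ := by
  have hsa : IsSelfAdjoint (CFC.abs (star c) * c) := by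
    rw [IsSelfAdjoint, star_mul, (CFC.abs_nonneg (star c)).isSelfAdjoint.star_eq, h]
  rw [← norm_cfcAbs_star_mul, ← norm_mul_cfcAbs_star]
  exact hsa.norm_le_norm_mul_comm

end CStarAlgebra

lemma oabs_eq_cfcAbs_s16 {H : Type*} [NormedAddCommGroup H] [InnerProductSpace ℂ H] [CompleteSpace H]
    (T : H →L[ℂ] H) : oabs T = CFC.abs T := by
  rw [oabs, CFC.abs, CFC.sqrt_eq_real_sqrt _ (star_mul_self_nonneg T), cfcₙ_eq_cfc, star_eq_adjoint]

theorem stmt16 {H : Type*} [NormedAddCommGroup H] [InnerProductSpace ℂ H] [CompleteSpace H]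
    (C : H →L[ℂ] H)
    (hC : oabs (adjoint C) * C = adjoint C * oabs (adjoint C))
    (x : H) (hx : ‖x‖ = 1) :
    ‖⟪(adjoint C * C) x, x⟫_ℂ‖ ≤ 1 / 4 * (‖C‖ + Real.sqrt ‖C ^ 2‖) ^ 2 := by
  rw [oabs_eq_cfcAbs_s16, ← star_eq_adjoint] at hC
  have hnorm : ‖C‖ ≤ Real.sqrt ‖C ^ 2‖ :=
    Real.le_sqrt_of_sq_le (sq_norm_le_norm_sq_of_cfcAbs_star_mul_eq hC)
  have hCx : ‖C x‖ ≤ ‖C‖ := by simpa [hx] using C.le_opNorm x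
  calc ‖⟪(adjoint C * C) x, x⟫_ℂ‖ = ‖C x‖ ^ 2 := by
        rw [mul_apply_eq_comp, adjoint_inner_left, inner_self_eq_norm_sq_to_K, norm_pow,
          RCLike.norm_ofReal, abs_norm]
    _ ≤ ‖C‖ ^ 2 := by gcongr
    _ = 1 / 4 * (‖C‖ + ‖C‖) ^ 2 := by ring
    _ ≤ 1 / 4 * (‖C‖ + Real.sqrt ‖C ^ 2‖) ^ 2 := by gcongr
end
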